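/- Let k be a field, G a group with identity e, H a Hopf algebra over k, and ℬ : G → Submodule k H a Hopf G-algebra structure on H. Fix g ∈ G and let f : H → k be a k-linear functional that vanishes on ℬ h for every h ≠ g. Then for every k-linear functional f' : H → k, the convolution f'*f (defined by (f'*f)(x) = (f' ⊗ f)(Δ(x))) also vanishes on ℬ h for every h ≠ g. Consequently, if ℬ g is finite-dimensional over k, then the set { f'*f : f' a k-linear functional on H } is contained in a finite-dimensional k-subspace of the dual space of H. -/
import Mathlib


open scoped TensorProduct

/-- A Hopf `G`-algebra structure on a Hopf algebra `H` over `k`. -/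
structure HopfGAlgebraStruct (k : Type*) [Field k] (G : Type*) [Group G] [DecidableEq G]
    (H : Type*) [Ring H] [HopfAlgebra k H] (ℬ : G → Submodule k H) : Prop where
  internal : DirectSum.IsInternal ℬ
  one_mem : (1 : H) ∈ ℬ (1 : G)
  mul_mem : ∀ {g h : G} {x y : H}, x ∈ ℬ g → y ∈ ℬ h → x * y ∈ ℬ (g * h)
  comul_mem : ∀ (g : G), ∀ x ∈ ℬ g,
    (Coalgebra.comul (R := k) (A := H)) x ∈
      LinearMap.range (TensorProduct.map (ℬ g).subtype (ℬ g).subtype)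
  antipode_mem : ∀ (g : G), ∀ x ∈ ℬ g, HopfAlgebra.antipode (R := k) x ∈ ℬ g⁻¹

/-- The convolution product of two `k`-linear functionals on a coalgebra `H`:
`(f' * f)(x) = (f' ⊗ f)(Δ x)`. -/
noncomputable def convFunctional (k : Type*) [Field k] (H : Type*) [Ring H] [HopfAlgebra k H]
    (f' f : H →ₗ[k] k) : H →ₗ[k] k :=
  (LinearMap.mul' k k) ∘ₗ (TensorProduct.map f' f) ∘ₗ (Coalgebra.comul (R := k) (A := H))

/-- if `f` vanishes on every homogeneous component `ℬ h` with `h ≠ g`, then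
so does `f' * f` for every functional `f'`; consequently, if `ℬ g` is finite-dimensional,
then all the convolutions `f' * f` lie in a common finite-dimensional subspace of the
dual space of `H`. -/
theorem conv_vanishes_off_degree_and_finite
    (k : Type*) [Field k] (G : Type*) [Group G] [DecidableEq G]
    (H : Type*) [Ring H] [HopfAlgebra k H] (ℬ : G → Submodule k H)
    (hH : HopfGAlgebraStruct k G H ℬ)
    (g : G) (f : H →ₗ[k] k)
    (hf : ∀ h : G, h ≠ g → ∀ x ∈ ℬ h, f x = 0) :
    (∀ (f' : H →ₗ[k] k) (h : G), h ≠ g → ∀ x ∈ ℬ h, convFunctional k H f' f x = 0) ∧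
    (FiniteDimensional k (ℬ g) →
      ∃ W : Submodule k (H →ₗ[k] k), FiniteDimensional k W ∧
        ∀ f' : H →ₗ[k] k, convFunctional k H f' f ∈ W) := by
  have key : ∀ (f' : H →ₗ[k] k) (h : G), h ≠ g → ∀ x ∈ ℬ h,
      convFunctional k H f' f x = 0 := by
    intro f' h hne x hx
    obtain ⟨y, hy⟩ := hH.comul_mem h x hx
    have hf0 : f ∘ₗ (ℬ h).subtype = 0 := by
      ext z; exact hf h hne z z.2
    rw [convFunctional, LinearMap.comp_apply, LinearMap.comp_apply, ← hy,
      ← LinearMap.comp_apply (TensorProduct.map f' f), ← TensorProduct.map_comp,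
      hf0, TensorProduct.map_zero_right]
    simp
  refine ⟨key, fun hfin => ?_⟩
  set N : Submodule k H := ⨆ h ∈ {h : G | h ≠ g}, ℬ h with hN
  have hdisj : Disjoint (ℬ g) N := hH.internal.submodule_iSupIndep g
  have hcod : Codisjoint (ℬ g) N := by
    rw [codisjoint_iff, eq_top_iff, ← hH.internal.submodule_iSup_eq_top]
    refine iSup_le fun h => ?_
    by_cases hh : h = g
    · subst hh; exact le_sup_left
    · exact le_trans (le_iSup₂ (f := fun h _ => ℬ h) h hh) le_sup_right
  have hcompl : IsCompl N (ℬ g) := ⟨hdisj.symm, hcod.symm⟩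
  have e1 : (H ⧸ N) ≃ₗ[k] (ℬ g) := Submodule.quotientEquivOfIsCompl N (ℬ g) hcompl
  have : FiniteDimensional k (H ⧸ N) := Module.Finite.equiv e1.symm
  have : FiniteDimensional k (Module.Dual k (H ⧸ N)) := inferInstance
  refine ⟨N.dualAnnihilator, Module.Finite.equiv N.dualQuotEquivDualAnnihilator, fun f' => ?_⟩
  rw [Submodule.mem_dualAnnihilator]
  intro w hw
  have hle : N ≤ LinearMap.ker (convFunctional k H f' f) := by
    refine iSup₂_le fun h hh => fun x hx => ?_
    exact key f' h hh x hx
  exact hle hw
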